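/- Let G be a finite multigraph of even order in which every vertex has even, positive degree, and which is connected. Then G can be decomposed into two odd subgraphs. -/

import Mathlib

open Finset
open scoped Classical

/-- A multigraph on vertex type `V` with edge index type `E`: each edge `e` has two
distinct endpoints given as an unordered pair `ends e` (no loops, multiple edges allowed). -/
structure Multigraph (V : Type) (E : Type) where
  ends : E → Sym2 V
  no_loops : ∀ e, ¬ (ends e).IsDiag

namespace Multigraph

variable {V E : Type} [Fintype V] [Fintype E]

/-- The number of edges from the edge set `F` incident with `v`. -/
noncomputable def degIn (G : Multigraph V E) (F : Finset E) (v : V) : ℕ :=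
  (F.filter (fun e => v ∈ G.ends e)).card

/-- The degree of `v` in `G`. -/
noncomputable def deg (G : Multigraph V E) (v : V) : ℕ := G.degIn Finset.univ v

/-- The underlying simple graph of `G`. -/
def simple (G : Multigraph V E) : SimpleGraph V where
  Adj x y := x ≠ y ∧ ∃ e : E, G.ends e = s(x, y)
  symm := ⟨by
    rintro x y ⟨hxy, e, he⟩
    exact ⟨hxy.symm, e, by rw [he, Sym2.eq_swap]⟩⟩
  loopless := ⟨fun x h => h.1 rfl⟩

/-- `C` is the vertex set of a connected component of the subgraph of `G` induced by `S`. -/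
def IsComponentOf (G : Multigraph V E) (S : Set V) (C : Finset V) : Prop :=
  ∃ v ∈ S, ∀ x : V, x ∈ C ↔
    Relation.ReflTransGen (fun a b => a ∈ S ∧ b ∈ S ∧ (G.simple).Adj a b) v x

/-- The number of edges of `G` with one endpoint in `U₁` and the other in `U₂`. -/
noncomputable def eBetween (G : Multigraph V E) (U₁ U₂ : Finset V) : ℕ :=
  (Finset.univ.filter (fun e : E => ∃ x ∈ U₁, ∃ y ∈ U₂, G.ends e = s(x, y))).card

/-- The set of vertices of `G` of odd degree. -/
noncomputable def oddVerts (G : Multigraph V E) : Finset V :=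
  Finset.univ.filter (fun v => Odd (G.deg v))

/-- The set of vertices of `G` of even degree. -/
noncomputable def evenVerts (G : Multigraph V E) : Finset V :=
  Finset.univ.filter (fun v => Even (G.deg v))

/-- `F` forms an odd subgraph: every vertex incident with an edge of `F` has odd `F`-degree. -/
def IsOddSet (G : Multigraph V E) (F : Finset E) : Prop :=
  ∀ v : V, (∃ e ∈ F, v ∈ G.ends e) → Odd (G.degIn F v)

/-- `F` forms an even subgraph: every vertex has even `F`-degree. -/
def IsEvenSet (G : Multigraph V E) (F : Finset E) : Prop :=
  ∀ v : V, Even (G.degIn F v)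

end Multigraph

open Multigraph

/-
Work over `ZMod 2`. The parity of the degrees of an edge set is the image of its indicator
under the mod-2 incidence matrix, so the achievable parity vectors form a subspace. For adjacent
`x, y` the column of an `xy`-edge is `e_x + e_y`; chaining along paths, `e_u + e_w` is achievable
whenever `u` and `w` are connected. Summing `e_{v₀} + e_v` over all vertices `v` of an even-order
connected graph gives the all-ones vector: an edge set `F` in which every vertex has odd degree.
Its complement then has odd degree at every vertex as well, because all degrees are even.
-/
namespace Multigraph

open Matrix

variable {V E : Type} (G : Multigraph V E)

theorem degIn_add_degIn_compl [Fintype E] (F : Finset E) (v : V) :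
    G.degIn F v + G.degIn Fᶜ v = G.deg v := by
  rw [deg, degIn, degIn, degIn, ← card_union_of_disjoint
    (disjoint_filter_filter disjoint_compl_right), ← filter_union, union_compl]

theorem odd_degIn_compl [Fintype E] {F : Finset E} {v : V} (hv : Even (G.deg v))
    (hF : Odd (G.degIn F v)) : Odd (G.degIn Fᶜ v) := by
  rw [← G.degIn_add_degIn_compl F v, Nat.even_add, ← Nat.not_odd_iff_even,
    ← Nat.not_odd_iff_even] at hv
  exact (not_iff_not.mp hv).mp hF

noncomputable def incMatrix : Matrix V E (ZMod 2) := fun v e => if v ∈ G.ends e then 1 else 0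

theorem incMatrix_col {e : E} {x y : V} (he : G.ends e = s(x, y)) :
    G.incMatrix.col e = Pi.single x 1 + Pi.single y 1 := by
  have hxy : x ≠ y := fun h => G.no_loops e (by simp [he, h])
  ext v
  by_cases hx : v = x <;> by_cases hy : v = y <;> simp_all [incMatrix]

variable [Fintype E]

theorem natCast_degIn (F : Finset E) (v : V) :
    (G.degIn F v : ZMod 2) = (G.incMatrix *ᵥ fun e => if e ∈ F then 1 else 0) v := by
  rw [degIn, card_eq_sum_ones, Nat.cast_sum, sum_filter]
  simp [mulVec, dotProduct, incMatrix, mul_ite, Finset.sum_ite_mem]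

theorem exists_natCast_degIn_eq_mulVec (f : E → ZMod 2) :
    ∃ F : Finset E, ∀ v, (G.degIn F v : ZMod 2) = (G.incMatrix *ᵥ f) v := by
  refine ⟨univ.filter (f · = 1), fun v => ?_⟩
  rw [natCast_degIn]
  congr 2
  ext e
  have hval : ∀ x : ZMod 2, x = 0 ∨ x = 1 := by decide
  rcases hval (f e) with h | h <;> simp [h]

theorem single_add_single_mem_range_of_reachable {u w : V} (h : G.simple.Reachable u w) :
    (Pi.single u 1 + Pi.single w 1 : V → ZMod 2) ∈ LinearMap.range G.incMatrix.mulVecLin := by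
  rw [SimpleGraph.reachable_iff_reflTransGen] at h
  induction h with
  | refl => exact ⟨0, by ext; simp [CharTwo.add_self_eq_zero]⟩
  | @tail x y _ hxy ih =>
    obtain ⟨-, e, he⟩ := hxy
    have hcol : Pi.single x 1 + Pi.single y 1 ∈ LinearMap.range G.incMatrix.mulVecLin :=
      ⟨Pi.single e 1, by simp [G.incMatrix_col he]⟩
    convert add_mem ih hcol using 1
    ext v
    simp only [Pi.add_apply]
    rw [← add_assoc, add_assoc (Pi.single u 1 v), CharTwo.add_self_eq_zero, add_zero]

theorem exists_degIn_odd_iff_of_connected (hconn : G.simple.Connected) (T : Finset V)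
    (hT : Even T.card) : ∃ F : Finset E, ∀ v, Odd (G.degIn F v) ↔ v ∈ T := by
  obtain ⟨v₀⟩ := hconn.nonempty
  -- Summing over `T` cancels the `v₀`-terms in pairs, since `#T` is even.
  have hmem : ∑ v ∈ T, (Pi.single v₀ 1 + Pi.single v 1 : V → ZMod 2) ∈
      LinearMap.range G.incMatrix.mulVecLin :=
    Submodule.sum_mem _ fun v _ => G.single_add_single_mem_range_of_reachable (hconn v₀ v)
  obtain ⟨f, hf⟩ := hmem
  obtain ⟨F, hF⟩ := G.exists_natCast_degIn_eq_mulVec f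
  refine ⟨F, fun v => ?_⟩
  rw [← ZMod.natCast_eq_one_iff_odd, hF, ← mulVecLin_apply, hf, sum_add_distrib,
    sum_const, ← Nat.cast_smul_eq_nsmul (ZMod 2), hT.natCast_zmod_two, zero_smul, zero_add,
    Finset.sum_apply]
  simp [Pi.single_apply]

end Multigraph

theorem stmt15 {V E : Type} [Fintype V] [Fintype E] (G : Multigraph V E)
    (horder : Even (Nat.card V)) (hdeg : ∀ v : V, Even (G.deg v) ∧ 0 < G.deg v)
    (hconn : G.simple.Connected) :
    ∃ F : Finset E, (∀ v : V, Odd (G.degIn F v)) ∧ (∀ v : V, Odd (G.degIn Fᶜ v)) := by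
  obtain ⟨F, hF⟩ := G.exists_degIn_odd_iff_of_connected hconn univ
    (by rwa [card_univ, ← Nat.card_eq_fintype_card])
  have hodd : ∀ v, Odd (G.degIn F v) := fun v => (hF v).2 (mem_univ v)
  exact ⟨F, hodd, fun v => G.odd_degIn_compl (hdeg v).1 (hodd v)⟩
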